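/- arXiv:2210.14735 — 4 statements merged into one kernel-verified Lean document; each statement's English description precedes it below -/
import Mathlib

section
/- Let X_1,…,X_{n+1} be iid real-valued random variables (ties allowed) and let X_{(j)} denote the j-th order statistic of X_1,…,X_n. Then for any 1 ≤ j ≤ n, P[X_{n+1} ≤ X_{(j)}] ≥ j/(n+1). -/
/-!
Write `c_k` for the number of `X_i` (among all `n + 1`) lying strictly below `X_k`. The event
`X_{n+1} ≤ X_{(j)}` is `c_{n+1} < j`. For every outcome at least `j` indices `k` have `c_k < j`,
namely those sorted into the first `j` positions, however ties are broken. An iid vector is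
exchangeable, so the `n + 1` events `c_k < j` all have the same probability, and summing their
indicators gives `j ≤ (n + 1) P[c_{n+1} < j]`.
-/

open MeasureTheory ProbabilityTheory
open scoped ENNReal

noncomputable def binCDF (m k : ℕ) (p : ℝ) : ℝ :=
  ∑ i ∈ Finset.range (k + 1), (m.choose i : ℝ) * p ^ i * (1 - p) ^ (m - i)

noncomputable def betaCDF (a b : ℕ) (x : ℝ) : ℝ :=
  (∫ t in (0:ℝ)..x, t ^ (a - 1) * (1 - t) ^ (b - 1)) /
    (∫ t in (0:ℝ)..1, t ^ (a - 1) * (1 - t) ^ (b - 1))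

noncomputable def orderStat {n : ℕ} (x : Fin n → ℝ) (j : Fin n) : ℝ :=
  x (Tuple.sort x j)

open Finset

section Rank

variable {α ι : Type*} [LinearOrder α] [Fintype ι]

def countLT (v : ι → α) (k : ι) : ℕ := #{i | v i < v k}

lemma countLT_comp_perm (v : ι → α) (e : Equiv.Perm ι) (k : ι) :
    countLT (v ∘ e) k = countLT v (e k) := by
  simp only [countLT, card_filter, Function.comp_apply]
  exact Equiv.sum_comp e fun i => if v i < v (e k) then 1 else 0

variable {m : ℕ}

lemma countLT_sort_le (v : Fin m → α) (p : Fin m) : countLT v (Tuple.sort v p) ≤ p := by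
  calc countLT v (Tuple.sort v p) = #{q | v (Tuple.sort v q) < v (Tuple.sort v p)} := by
        rw [← countLT_comp_perm]; rfl
    _ ≤ #(Iio p) := card_le_card fun q hq => by
        simp only [mem_filter, mem_univ, true_and] at hq
        exact mem_Iio.2 ((Tuple.monotone_sort v).reflect_lt hq)
    _ = p := Fin.card_Iio p

lemma le_apply_sort_iff (v : Fin m → α) (t : α) (k : Fin m) :
    t ≤ v (Tuple.sort v k) ↔ #{i | v i < t} ≤ k := by
  constructor
  · intro h
    refine le_trans (card_le_card fun i hi => ?_) (countLT_sort_le v k)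
    simp only [mem_filter, mem_univ, true_and] at hi ⊢
    exact hi.trans_le h
  · intro h
    by_contra! hlt
    have hsub : (Iic k).map (Tuple.sort v).toEmbedding ⊆ ({i | v i < t} : Finset _) :=
        fun i hi => by
      obtain ⟨q, hq, rfl⟩ := mem_map.1 hi
      simpa using (Tuple.monotone_sort v (mem_Iic.1 hq)).trans_lt hlt
    have := card_le_card hsub
    rw [card_map, Fin.card_Iic] at this
    omega

lemma le_card_countLT_lt (v : Fin m → α) {j : ℕ} (hj : j ≤ m) :
    j ≤ #{k | countLT v k < j} := by
  have hsub : univ.map ((Fin.castLEEmb hj).trans (Tuple.sort v).toEmbedding) ⊆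
      ({k | countLT v k < j} : Finset _) := fun k hk => by
    obtain ⟨q, -, rfl⟩ := mem_map.1 hk
    simpa using (countLT_sort_le v (Fin.castLE hj q)).trans_lt q.isLt
  simpa using card_le_card hsub

end Rank

lemma le_orderStat_init_iff {n : ℕ} (v : Fin (n + 1) → ℝ) (k : Fin n) :
    v (Fin.last n) ≤ orderStat (fun i => v i.castSucc) k ↔ countLT v (Fin.last n) ≤ k := by
  refine (le_apply_sort_iff (fun i => v i.castSucc) _ k).trans ?_
  simp only [countLT, card_filter, Fin.sum_univ_castSucc, lt_irrefl, if_false, add_zero]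

open Classical in
lemma natCast_mul_measure_univ_le_sum_measure {Ω ι : Type*} [MeasurableSpace Ω] (μ : Measure Ω)
    (s : Finset ι) {E : ι → Set Ω} (hE : ∀ i ∈ s, MeasurableSet (E i)) {j : ℕ}
    (h : ∀ ω, j ≤ #{i ∈ s | ω ∈ E i}) :
    j * μ Set.univ ≤ ∑ i ∈ s, μ (E i) := by
  calc j * μ Set.univ = ∫⁻ _, (j : ℝ≥0∞) ∂μ := (lintegral_const _).symm
    _ ≤ ∫⁻ ω, ∑ i ∈ s, (E i).indicator 1 ω ∂μ := lintegral_mono fun ω => by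
        simp only [sum_indicator_eq_sum_filter, Pi.one_apply, sum_const, nsmul_one]
        exact_mod_cast h ω
    _ = ∑ i ∈ s, μ (E i) := by
        rw [lintegral_finsetSum _ fun i hi => measurable_one.indicator (hE i hi)]
        exact sum_congr rfl fun i hi => lintegral_indicator_one (hE i hi)

section Exchangeable

variable {ι : Type*} [Fintype ι]

lemma measurePreserving_comp_perm {β : Type*} [MeasurableSpace β]
    (ν : Measure β) [SigmaFinite ν] (e : Equiv.Perm ι) :
    MeasurePreserving (fun v : ι → β => v ∘ e) (Measure.pi fun _ => ν)
      (Measure.pi fun _ => ν) := by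
  convert measurePreserving_piCongrLeft (fun _ => ν) e.symm using 1
  ext v i
  simp [MeasurableEquiv.coe_piCongrLeft, Equiv.piCongrLeft_apply]

lemma measurableSet_countLT_lt (k : ι) (j : ℕ) :
    MeasurableSet {v : ι → ℝ | countLT v k < j} := by
  have : Measurable fun v : ι → ℝ => countLT v k := by
    simp only [countLT, card_filter]
    exact Finset.measurable_sum _ fun i _ => Measurable.ite
      (measurableSet_lt (measurable_pi_apply i) (measurable_pi_apply k))
      measurable_const measurable_const
  exact this measurableSet_Iio

lemma pi_countLT_lt_eq (ν : Measure ℝ) [SigmaFinite ν] (k k' : ι) (j : ℕ) :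
    Measure.pi (fun _ => ν) {v : ι → ℝ | countLT v k < j} =
      Measure.pi (fun _ => ν) {v : ι → ℝ | countLT v k' < j} := by
  classical
  have hpre : (fun v : ι → ℝ => v ∘ Equiv.swap k' k) ⁻¹' {v | countLT v k' < j} =
      {v | countLT v k < j} := by
    ext v
    simp [countLT_comp_perm]
  rw [← hpre, (measurePreserving_comp_perm ν _).measure_preimage
    (measurableSet_countLT_lt k' j).nullMeasurableSet]

end Exchangeable

lemma nat_le_mul_pi_countLT_lt {m : ℕ} (ν : Measure ℝ) [IsProbabilityMeasure ν] (k : Fin m)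
    {j : ℕ} (hj : j ≤ m) :
    (j : ℝ≥0∞) ≤ m * Measure.pi (fun _ => ν) {v : Fin m → ℝ | countLT v k < j} := by
  have := natCast_mul_measure_univ_le_sum_measure (Measure.pi fun _ => ν) univ
    (fun k _ => measurableSet_countLT_lt k j) fun v => by simpa using le_card_countLT_lt v hj
  simpa [pi_countLT_lt_eq ν _ k] using this

/-- For iid `X_1,…,X_{n+1}` (ties allowed), `P[X_{n+1} ≤ X_{(j)}] ≥ j/(n+1)`, where
`X_{(j)}` is the `j`-th order statistic of `X_1,…,X_n`. -/
theorem prob_le_orderStat_ge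
    {Ω : Type*} [MeasurableSpace Ω] (P : Measure Ω) [IsProbabilityMeasure P]
    (n : ℕ) (X : Fin (n + 1) → Ω → ℝ) (hX : ∀ i, Measurable (X i))
    (μ : Measure ℝ)
    (hindep : iIndepFun X P)
    (hid : ∀ i, Measure.map (X i) P = μ)
    (j : ℕ) (hj1 : 1 ≤ j) (hjn : j ≤ n) :
    (j : ℝ≥0∞) / (n + 1)
      ≤ P {ω | X (Fin.last n) ω ≤
          orderStat (fun i : Fin n => X i.castSucc ω) ⟨j - 1, by omega⟩} := by
  have : IsProbabilityMeasure μ := hid 0 ▸ Measure.isProbabilityMeasure_map (hX 0).aemeasurable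
  have hlaw : P.map (fun ω i => X i ω) = Measure.pi fun _ => μ := by
    rw [hindep.map_fun_eq_pi_map fun i => (hX i).aemeasurable]
    simp_rw [hid]
  have hevent : {ω | X (Fin.last n) ω ≤
      orderStat (fun i : Fin n => X i.castSucc ω) ⟨j - 1, by omega⟩} =
      (fun ω i => X i ω) ⁻¹' {v | countLT v (Fin.last n) < j} := by
    ext ω
    simp only [Set.mem_ofPred_eq, Set.mem_preimage, le_orderStat_init_iff (fun i => X i ω)]
    omega
  rw [hevent, ← Measure.map_apply (measurable_pi_lambda _ hX) (measurableSet_countLT_lt _ _),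
    hlaw, ENNReal.div_le_iff (by simp) (by simp), mul_comm]
  exact_mod_cast nat_le_mul_pi_countLT_lt μ (Fin.last n) (by omega : j ≤ n + 1)
end

section
/- Let r_1,…,r_{n+1} be iid real random variables and α ∈ (0,1) with ⌈(1−α)(n+1)⌉ ≤ n. Define Q̂ = r_{(⌈(1−α)(n+1)⌉)}. Then the conditional coverage P[r_{n+1} ≤ Q̂ | r_1,…,r_n] stochastically dominates a Beta(⌈(1−α)(n+1)⌉, ⌊α(n+1)⌋) random variable, with equality in distribution if the r_i are almost surely distinct. -/
/-!
Let `F` be the cdf of `μ` and `k = ⌈(1 - α)(n + 1)⌉`. Since `F` is monotone, `F(r_(k)) ≤ t` holds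
exactly when at least `k` of the `n` calibration scores lie in the lower set `S_t = {F ≤ t}`, and
by independence the number of those is binomial with parameters `n` and `μ(S_t)`. The tail
`p ↦ P(Bin(n, p) ≥ k)` is a polynomial whose derivative is a multiple of the `Beta(k, n + 1 - k)`
density, so it is that Beta cdf, and it is increasing on `[0, 1]`. Finally `μ(S_t) ≤ t`, with
equality when `μ` has no atoms (then `F` is continuous and attains `t`); and if two independent
scores tie with probability zero, then `μ` has no atoms.
-/

open MeasureTheory ProbabilityTheory
open scoped ENNReal

section BinomialTail

open Polynomial

/-- `P(Bin(n, p) ≥ k)` as a polynomial in `p`. -/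
noncomputable def binomialTail (n k : ℕ) : ℝ[X] :=
  ∑ j ∈ Finset.Icc k n, bernsteinPolynomial ℝ n j

namespace binomialTail

variable {n k : ℕ}

lemma eval_eq (n k : ℕ) (p : ℝ) :
    (binomialTail n k).eval p =
      ∑ j ∈ Finset.Icc k n, (n.choose j : ℝ) * p ^ j * (1 - p) ^ (n - j) := by
  simp [binomialTail, bernsteinPolynomial, eval_finsetSum]

lemma eval_zero (hk : 1 ≤ k) : (binomialTail n k).eval 0 = 0 := by
  refine (eval_finsetSum _ _ _).trans (Finset.sum_eq_zero fun j hj => ?_)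
  rw [bernsteinPolynomial.eval_at_0, if_neg (by grind)]

lemma eval_one (hkn : k ≤ n) : (binomialTail n k).eval 1 = 1 := by
  rw [binomialTail, eval_finsetSum, Finset.sum_eq_single_of_mem n (by simp [hkn])]
  · simp [bernsteinPolynomial.eval_at_1]
  · intro j _ hj
    rw [bernsteinPolynomial.eval_at_1, if_neg hj]

lemma derivative_eq (hk : 1 ≤ k) (hkn : k ≤ n) :
    derivative (binomialTail n k) = n * bernsteinPolynomial ℝ (n - 1) (k - 1) := by
  obtain ⟨i, rfl⟩ : ∃ i, k = i + 1 := ⟨k - 1, by omega⟩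
  have htop : bernsteinPolynomial ℝ (n - 1) n = 0 := bernsteinPolynomial.eq_zero_of_lt ℝ (by omega)
  rw [binomialTail, ← Finset.Ico_add_one_right_eq_Icc, ← Finset.sum_Ico_add', derivative_sum]
  simp_rw [bernsteinPolynomial.derivative_succ, ← Finset.mul_sum]
  have htel := Finset.sum_Ico_sub (bernsteinPolynomial ℝ (n - 1)) (show i ≤ n by omega)
  simp only [Finset.sum_sub_distrib, htop] at htel ⊢
  rw [Nat.add_sub_cancel]
  linear_combination (n : ℝ[X]) * -htel

lemma monotoneOn (hk : 1 ≤ k) (hkn : k ≤ n) :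
    MonotoneOn (fun p => (binomialTail n k).eval p) (Set.Icc 0 1) := by
  refine monotoneOn_of_deriv_nonneg (convex_Icc 0 1) (Polynomial.continuousOn _)
    (Polynomial.differentiableOn _) fun p hp => ?_
  rw [interior_Icc] at hp
  rw [Polynomial.deriv, derivative_eq hk hkn]
  simp only [eval_mul, eval_natCast, bernsteinPolynomial, eval_pow, eval_sub,
    Polynomial.eval_one, eval_X]
  have := hp.1.le
  have := sub_nonneg.mpr hp.2.le
  positivity

end binomialTail

lemma integral_div_integral_eq_of_hasDerivAt {T f : ℝ → ℝ} {c : ℝ} (hc : c ≠ 0)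
    (hT : ∀ x, HasDerivAt T (c * f x) x) (hf : Continuous f) (h0 : T 0 = 0) (h1 : T 1 = 1)
    (x : ℝ) : (∫ t in (0:ℝ)..x, f t) / (∫ t in (0:ℝ)..1, f t) = T x := by
  have hint : ∀ b, ∫ t in (0:ℝ)..b, f t = T b / c := fun b => by
    rw [eq_div_iff hc, mul_comm, ← intervalIntegral.integral_const_mul,
      intervalIntegral.integral_eq_sub_of_hasDerivAt (fun x _ => hT x)
        ((hf.const_mul c).intervalIntegrable _ _), h0, sub_zero]
  rw [hint, hint, h1]
  field_simp

lemma betaCDF_eq_eval_binomialTail {n k : ℕ} (hk : 1 ≤ k) (hkn : k ≤ n) (t : ℝ) :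
    betaCDF k (n + 1 - k) t = (binomialTail n k).eval t := by
  have hc : (n * (n - 1).choose (k - 1) : ℝ) ≠ 0 := by
    have := Nat.choose_pos (show k - 1 ≤ n - 1 by omega)
    have : (0 : ℝ) < n := by exact_mod_cast (show 0 < n by omega)
    positivity
  refine integral_div_integral_eq_of_hasDerivAt (T := fun p => (binomialTail n k).eval p) hc
    (fun x => ?_) (by fun_prop : Continuous fun t : ℝ => t ^ (k - 1) * (1 - t) ^ (n + 1 - k - 1))
    (binomialTail.eval_zero hk) (binomialTail.eval_one hkn) t
  refine (Polynomial.hasDerivAt (binomialTail n k) x).congr_deriv ?_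
  rw [binomialTail.derivative_eq hk hkn]
  simp only [eval_mul, eval_natCast, bernsteinPolynomial, eval_pow, eval_sub,
    Polynomial.eval_one, eval_X]
  rw [show n + 1 - k - 1 = n - 1 - (k - 1) by omega]
  ring

end BinomialTail

section CDF

open Set Filter

variable (μ : Measure ℝ) [IsProbabilityMeasure μ]

lemma measure_cdf_le_le (t : ℝ) : μ {x | cdf μ x ≤ t} ≤ ENNReal.ofReal t := by
  set S := {x | cdf μ x ≤ t}
  have hS : IsLowerSet S := fun a b hba ha => (monotone_cdf μ hba).trans ha
  rcases S.eq_empty_or_nonempty with hemp | hne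
  · simp [hemp]
  by_cases hbdd : BddAbove S
  swap
  · have hall : ∀ x, cdf μ x ≤ t := fun x => by
      obtain ⟨y, hy, hxy⟩ := not_bddAbove_iff.mp hbdd x
      exact hS hxy.le hy
    calc μ S ≤ 1 := prob_le_one
      _ ≤ ENNReal.ofReal t :=
        ENNReal.one_le_ofReal.mpr (le_of_tendsto' (tendsto_cdf_atTop μ) hall)
  set s := sSup S
  by_cases hs : s ∈ S
  · calc μ S ≤ μ (Iic s) := measure_mono fun x hx => le_csSup hbdd hx
      _ = ENNReal.ofReal (cdf μ s) := (ofReal_cdf μ s).symm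
      _ ≤ ENNReal.ofReal t := ENNReal.ofReal_le_ofReal hs
  -- otherwise `S = Iio s`, whose measure is the left limit of the cdf at `s`
  have hIio : Iio s ⊆ S := fun x hx => by
    obtain ⟨y, hy, hxy⟩ := exists_lt_of_lt_csSup hne hx
    exact hS hxy.le hy
  have hSs : S ⊆ Iio s := fun x hx => (le_csSup hbdd hx).lt_of_ne (by rintro rfl; exact hs hx)
  calc μ S ≤ μ (Iio s) := measure_mono hSs
    _ = ENNReal.ofReal (Function.leftLim (cdf μ) s) := by
      nth_rw 1 [← measure_cdf μ]
      rw [(cdf μ).measure_Iio (tendsto_cdf_atBot μ), sub_zero]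
    _ ≤ ENNReal.ofReal t := ENNReal.ofReal_le_ofReal <|
      le_of_tendsto ((monotone_cdf μ).tendsto_leftLim s) (eventually_nhdsWithin_of_forall hIio)

lemma continuous_cdf [NullSingletonClass μ] : Continuous (cdf μ) := by
  refine continuous_iff_continuousAt.mpr fun x => ?_
  have hjump := (cdf μ).measure_singleton x
  rw [measure_cdf, measure_singleton, eq_comm, ENNReal.ofReal_eq_zero, sub_nonpos] at hjump
  rw [(monotone_cdf μ).continuousAt_iff_leftLim_eq_rightLim, (cdf μ).rightLim_eq]
  exact le_antisymm ((monotone_cdf μ).leftLim_le le_rfl) hjump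

lemma measure_cdf_le_eq [NullSingletonClass μ] {t : ℝ} (ht : t ∈ Icc 0 1) :
    μ {x | cdf μ x ≤ t} = ENNReal.ofReal t := by
  refine le_antisymm (measure_cdf_le_le μ t) ?_
  rcases ht.2.eq_or_lt with rfl | ht1
  · simp [cdf_le_one]
  rcases ht.1.eq_or_lt with rfl | ht0
  · simp
  obtain ⟨a, ha⟩ := ((tendsto_cdf_atBot μ).eventually (gt_mem_nhds ht0)).exists
  obtain ⟨b, hb⟩ := ((tendsto_cdf_atTop μ).eventually (lt_mem_nhds ht1)).exists
  obtain ⟨x, hx⟩ := intermediate_value_univ a b (continuous_cdf μ) ⟨ha.le, hb.le⟩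
  calc ENNReal.ofReal t = μ (Iic x) := by rw [← ofReal_cdf, hx]
    _ ≤ μ {x | cdf μ x ≤ t} := measure_mono fun y hy => (monotone_cdf μ hy).trans hx.le

end CDF

lemma nullSingletonClass_of_indepFun {Ω β : Type*} [MeasurableSpace Ω] [MeasurableSpace β]
    [MeasurableSingletonClass β] {P : Measure Ω} {μ : Measure β} {X Y : Ω → β}
    (hX : Measurable X) (hY : Measurable Y) (hXY : IndepFun X Y P)
    (hXμ : P.map X = μ) (hYμ : P.map Y = μ) (hdiag : P {ω | X ω = Y ω} = 0) :
    NullSingletonClass μ where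
  measure_singleton a := by
    have hprod := hXY.measure_inter_preimage_eq_mul {a} {a}
      (measurableSet_singleton a) (measurableSet_singleton a)
    rw [← Measure.map_apply hX (measurableSet_singleton a),
      ← Measure.map_apply hY (measurableSet_singleton a), hXμ, hYμ] at hprod
    have hsq : μ {a} * μ {a} = 0 := by
      rw [← hprod]
      exact measure_mono_null (fun ω ⟨hXa, hYa⟩ => hXa.trans hYa.symm) hdiag
    exact mul_self_eq_zero.mp hsq

section OrderStatistics

open Finset

lemma Fin.mem_iff_val_lt_card_of_isLowerSet {n : ℕ} {T : Finset (Fin n)}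
    (hT : IsLowerSet (T : Set (Fin n))) (j : Fin n) : j ∈ T ↔ (j : ℕ) < #T := by
  constructor
  · intro hj
    have := card_le_card fun i (hi : i ∈ Iic j) => hT (mem_Iic.mp hi) hj
    rw [Fin.card_Iic] at this
    omega
  · intro hj
    by_contra hjT
    have := card_le_card fun i (hi : i ∈ T) => mem_Iio.mpr (not_le.mp fun hji => hjT (hT hji hi))
    rw [Fin.card_Iio] at this
    omega

open scoped Classical in
lemma orderStat_mem_iff {n : ℕ} (x : Fin n → ℝ) (j : Fin n) {S : Set ℝ} (hS : IsLowerSet S) :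
    orderStat x j ∈ S ↔ (j : ℕ) < #{i | x i ∈ S} := by
  have hlower : IsLowerSet (({i | x (Tuple.sort x i) ∈ S} : Finset (Fin n)) : Set (Fin n)) :=
    fun a b hba ha => by simpa using hS (Tuple.monotone_sort x hba) (by simpa using ha)
  have hj := Fin.mem_iff_val_lt_card_of_isLowerSet hlower j
  rw [mem_filter_univ] at hj
  rw [orderStat, hj, card_equiv (Tuple.sort x) (t := {i | x i ∈ S}) (by simp)]

end OrderStatistics

section BinomialCount

open Finset
open scoped Classical

lemma setOf_filter_mem_eq_iInter {ι Ω β : Type*} [Fintype ι] {X : ι → Ω → β} {S : Set β}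
    (A : Finset ι) :
    {ω | ({i | X i ω ∈ S} : Finset ι) = A} = ⋂ i, X i ⁻¹' (if i ∈ A then S else Sᶜ) := by
  ext ω
  simp only [Set.mem_ofPred_eq, Finset.ext_iff, mem_filter_univ, Set.mem_iInter]
  refine forall_congr' fun i => ?_
  split_ifs with hi <;> simp [hi]

variable {ι Ω β : Type*} [Fintype ι] [MeasurableSpace Ω] [MeasurableSpace β] {P : Measure Ω}
  {μ : Measure β} {X : ι → Ω → β} {S : Set β}

lemma measurableSet_setOf_filter_mem_eq (hX : ∀ i, Measurable (X i)) (hS : MeasurableSet S)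
    (A : Finset ι) : MeasurableSet {ω | ({i | X i ω ∈ S} : Finset ι) = A} := by
  rw [setOf_filter_mem_eq_iInter]
  exact .iInter fun i => hX i (by split_ifs; exacts [hS, hS.compl])

lemma measure_setOf_filter_mem_eq (hX : ∀ i, Measurable (X i)) (hind : iIndepFun X P)
    (hid : ∀ i, P.map (X i) = μ) (hS : MeasurableSet S) (A : Finset ι) :
    P {ω | ({i | X i ω ∈ S} : Finset ι) = A} = μ S ^ #A * μ Sᶜ ^ #Aᶜ := by
  have hmeas : ∀ i, MeasurableSet (if i ∈ A then S else Sᶜ) := fun i => by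
    split_ifs; exacts [hS, hS.compl]
  have hprod := hind.measure_inter_preimage_eq_mul univ fun i _ => hmeas i
  simp only [mem_univ, Set.iInter_true] at hprod
  rw [setOf_filter_mem_eq_iInter, hprod]
  simp_rw [← Measure.map_apply (hX _) (hmeas _), hid, apply_ite μ]
  rw [prod_ite, prod_const, prod_const, filter_univ_mem, filter_notMem_eq_sdiff,
    ← compl_eq_univ_sdiff]

lemma measureReal_le_card_filter_mem [IsProbabilityMeasure μ] (hX : ∀ i, Measurable (X i))
    (hind : iIndepFun X P) (hid : ∀ i, P.map (X i) = μ) (hS : MeasurableSet S) (k : ℕ) :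
    P.real {ω | k ≤ #{i | X i ω ∈ S}} = (binomialTail (Fintype.card ι) k).eval (μ.real S) := by
  have := hind.isProbabilityMeasure
  have hunion : {ω | k ≤ #{i | X i ω ∈ S}} =
      ⋃ A ∈ ({A | k ≤ #A} : Finset (Finset ι)), {ω | ({i | X i ω ∈ S} : Finset ι) = A} := by
    ext ω; simp
  have hdisj : (({A | k ≤ #A} : Finset (Finset ι)) : Set (Finset ι)).PairwiseDisjoint
      fun A => {ω | ({i | X i ω ∈ S} : Finset ι) = A} :=
    fun A _ B _ hAB => Set.disjoint_left.mpr fun ω hA hB => hAB (hA.symm.trans hB)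
  have hterm : ∀ A : Finset ι, P.real {ω | ({i | X i ω ∈ S} : Finset ι) = A} =
      μ.real S ^ #A * (1 - μ.real S) ^ (Fintype.card ι - #A) := fun A => by
    rw [measureReal_def, measure_setOf_filter_mem_eq hX hind hid hS, ENNReal.toReal_mul,
      ENNReal.toReal_pow, ENNReal.toReal_pow, ← measureReal_def, ← measureReal_def,
      probReal_compl_eq_one_sub hS, card_compl]
  have hrange : ({j ∈ range (Fintype.card ι + 1) | k ≤ j} : Finset ℕ) =
      Icc k (Fintype.card ι) := by
    ext j
    simp only [mem_filter, mem_range, mem_Icc]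
    omega
  rw [hunion, measureReal_biUnion_finset hdisj fun A _ =>
    measurableSet_setOf_filter_mem_eq hX hS A]
  simp_rw [hterm]
  rw [sum_filter, ← powerset_univ, sum_powerset_apply_card
    (fun j => if k ≤ j then μ.real S ^ j * (1 - μ.real S) ^ (Fintype.card ι - j) else 0),
    binomialTail.eval_eq, card_univ]
  simp_rw [smul_ite, smul_zero]
  rw [← sum_filter, hrange]
  refine sum_congr rfl fun j _ => ?_
  rw [nsmul_eq_mul, mul_assoc]

end BinomialCount

open scoped Classical Finset in
lemma measureReal_cdf_orderStat_le {Ω : Type*} [MeasurableSpace Ω] {P : Measure Ω} {n k : ℕ}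
    (hk : 1 ≤ k) (hkn : k ≤ n) {X : Fin n → Ω → ℝ} (hX : ∀ i, Measurable (X i))
    {μ : Measure ℝ} [IsProbabilityMeasure μ] (hind : iIndepFun X P)
    (hid : ∀ i, P.map (X i) = μ) (t : ℝ) :
    (P {ω | (μ (Set.Iic (orderStat (fun i => X i ω) ⟨k - 1, by omega⟩))).toReal ≤ t}).toReal =
      (binomialTail n k).eval (μ.real {x | cdf μ x ≤ t}) := by
  have hS : IsLowerSet {x | cdf μ x ≤ t} := fun a b hba ha => (monotone_cdf μ hba).trans ha
  have hevent : {ω | (μ (Set.Iic (orderStat (fun i => X i ω) ⟨k - 1, by omega⟩))).toReal ≤ t} =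
      {ω | k ≤ #{i | X i ω ∈ {x | cdf μ x ≤ t}}} := by
    ext ω
    change (μ (Set.Iic _)).toReal ≤ t ↔ k ≤ _
    rw [← measureReal_def, ← cdf_eq_real]
    exact (orderStat_mem_iff _ _ hS).trans (by dsimp only; omega)
  rw [hevent, ← measureReal_def, measureReal_le_card_filter_mem (S := {x | cdf μ x ≤ t}) hX hind hid
    ((monotone_cdf μ).measurable measurableSet_Iic), Fintype.card_fin]

/-- Distribution of conformal coverage: for iid scores `r_1,…,r_{n+1}` with common law `μ`
and `Q̂ = r_{(⌈(1-α)(n+1)⌉)}`, the conditional coverage `P[r_{n+1} ≤ Q̂ | r_1,…,r_n]`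
stochastically dominates a `Beta(⌈(1-α)(n+1)⌉, ⌊α(n+1)⌋)` random variable, with equality
in distribution if the scores are almost surely distinct. -/
theorem conformal_coverage_dominates_beta
    {Ω : Type*} [MeasurableSpace Ω] (P : Measure Ω)
    (n : ℕ) (hn : 1 ≤ n) (r : Fin (n + 1) → Ω → ℝ) (hr : ∀ i, Measurable (r i))
    (μ : Measure ℝ) [IsProbabilityMeasure μ]
    (hindep : iIndepFun r P)
    (hid : ∀ i, Measure.map (r i) P = μ)
    (α : ℝ) (hα : α ∈ Set.Ioo (0:ℝ) 1)
    (hk : (⌈(1 - α) * (n + 1 : ℝ)⌉).toNat ≤ n) :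
    (∀ t ∈ Set.Icc (0:ℝ) 1,
        (P {ω |
            (μ (Set.Iic (orderStat (fun i : Fin n => r i.castSucc ω)
                ⟨(⌈(1 - α) * (n + 1 : ℝ)⌉).toNat - 1, by omega⟩))).toReal ≤ t}).toReal
          ≤ betaCDF (⌈(1 - α) * (n + 1 : ℝ)⌉).toNat (⌊α * (n + 1 : ℝ)⌋).toNat t) ∧
      ((∀ i j : Fin (n + 1), i ≠ j → P {ω | r i ω = r j ω} = 0) →
        ∀ t ∈ Set.Icc (0:ℝ) 1,
          (P {ω |
              (μ (Set.Iic (orderStat (fun i : Fin n => r i.castSucc ω)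
                  ⟨(⌈(1 - α) * (n + 1 : ℝ)⌉).toNat - 1, by omega⟩))).toReal ≤ t}).toReal
            = betaCDF (⌈(1 - α) * (n + 1 : ℝ)⌉).toNat (⌊α * (n + 1 : ℝ)⌋).toNat t) := by
  have hk1 : 1 ≤ (⌈(1 - α) * (n + 1 : ℝ)⌉).toNat := by
    have : 0 < ⌈(1 - α) * (n + 1 : ℝ)⌉ :=
      Int.ceil_pos.mpr (mul_pos (by linarith [hα.2]) (by positivity))
    omega
  have hceil : ⌈(1 - α) * (n + 1 : ℝ)⌉ = (n + 1 : ℤ) - ⌊α * (n + 1 : ℝ)⌋ := by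
    rw [show (1 - α) * (n + 1 : ℝ) = ((n + 1 : ℤ) : ℝ) + -(α * (n + 1)) by push_cast; ring,
      Int.ceil_intCast_add, Int.ceil_neg, sub_eq_add_neg]
  have hbeta : ∀ t, betaCDF (⌈(1 - α) * (n + 1 : ℝ)⌉).toNat (⌊α * (n + 1 : ℝ)⌋).toNat t =
      (binomialTail n (⌈(1 - α) * (n + 1 : ℝ)⌉).toNat).eval t := fun t => by
    rw [show (⌊α * (n + 1 : ℝ)⌋).toNat = n + 1 - (⌈(1 - α) * (n + 1 : ℝ)⌉).toNat by omega,
      betaCDF_eq_eval_binomialTail hk1 hk]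
  have hcov := measureReal_cdf_orderStat_le hk1 hk (fun i => hr i.castSucc)
    (hindep.precomp (Fin.castSucc_injective n)) (fun i => hid i.castSucc)
  refine ⟨fun t ht => ?_, fun hdiag t ht => ?_⟩
  · rw [hcov, hbeta]
    exact binomialTail.monotoneOn hk1 hk ⟨measureReal_nonneg, measureReal_le_one⟩ ht
      (ENNReal.toReal_le_of_le_ofReal ht.1 (measure_cdf_le_le μ t))
  · have : NeZero n := .of_pos hn
    have h01 : (0 : Fin (n + 1)) ≠ 1 := Fin.zero_ne_one'
    have := nullSingletonClass_of_indepFun (hr 0) (hr 1) (hindep.indepFun h01) (hid 0) (hid 1)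
      (hdiag 0 1 h01)
    rw [hcov, hbeta, measureReal_def, measure_cdf_le_eq μ ht, ENNReal.toReal_ofReal ht.1]
end

section
/- Let r_1,…,r_{n+1} be iid, ε, δ ∈ (0,1), and α ∈ (0,1) satisfy δ ≥ Bin(⌊α(n+1)−1⌋; n, ε). Then the prediction rule r_{n+1} ≤ r_{(⌈(1−α)(n+1)⌉)} is an (ε,δ)-tolerance region: with probability at least 1−δ over r_1,…,r_n, the conditional probability P[r_{n+1} ≤ r_{(⌈(1−α)(n+1)⌉)} | r_1,…,r_n] is at least 1−ε. -/
open MeasureTheory ProbabilityTheory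
open scoped ENNReal

/-! Let `F` be the cdf of `μ` and `t` the least point with `F t ≥ 1 - ε`; each calibration score
lies in `[t, ∞)` independently with probability `q = μ [t, ∞) ≥ ε`. If the coverage
`F r₍ₘ₊₁₎` falls below `1 - ε` then `r₍ₘ₊₁₎ < t`, so at most `n - m - 1` scores lie in `[t, ∞)`,
an event of probability `Bin(n - m - 1; n, q) ≤ Bin(n - m - 1; n, ε)`: the binomial cdf decreases
in the success probability, its derivative being `-n` times a Bernstein polynomial. Finally
`n - m - 1 = ⌊α (n + 1) - 1⌋` for `m + 1 = ⌈(1 - α) (n + 1)⌉`. -/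

open Finset Polynomial

theorem derivative_sum_range_bernsteinPolynomial (R : Type*) [CommRing R] (n k : ℕ) :
    derivative (∑ i ∈ range (k + 1), bernsteinPolynomial R n i) =
      -n * bernsteinPolynomial R (n - 1) k := by
  induction k with
  | zero => simp [bernsteinPolynomial.derivative_zero]
  | succ k ih =>
    rw [sum_range_succ, derivative_add, ih, bernsteinPolynomial.derivative_succ]
    ring

theorem binCDF_eq_eval (n k : ℕ) (p : ℝ) :
    binCDF n k p = (∑ i ∈ range (k + 1), bernsteinPolynomial ℝ n i).eval p := by
  simp [binCDF, bernsteinPolynomial, eval_finsetSum]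

theorem eval_bernsteinPolynomial_nonneg (n ν : ℕ) {x : ℝ} (hx : x ∈ Set.Icc 0 1) :
    0 ≤ (bernsteinPolynomial ℝ n ν).eval x := by
  have h1x : 0 ≤ 1 - x := sub_nonneg.2 hx.2
  have hx0 := hx.1
  simp only [bernsteinPolynomial, eval_mul, eval_natCast, eval_pow, eval_X, eval_sub, eval_one]
  positivity

theorem binCDF_antitoneOn (n k : ℕ) : AntitoneOn (binCDF n k) (Set.Icc 0 1) := by
  rw [show binCDF n k = _ from funext (binCDF_eq_eval n k)]
  refine antitoneOn_of_deriv_nonpos (convex_Icc 0 1) (Polynomial.continuousOn _)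
    (Polynomial.differentiableOn _) fun p hp => ?_
  rw [Polynomial.deriv, derivative_sum_range_bernsteinPolynomial, eval_mul, eval_neg,
    eval_natCast, neg_mul, neg_nonpos]
  exact mul_nonneg n.cast_nonneg
    (eval_bernsteinPolynomial_nonneg _ _ (interior_subset (s := Set.Icc (0:ℝ) 1) hp))

namespace ProbabilityTheory

variable {Ω ι β : Type*} [Fintype ι] {X : ι → Ω → β} {S : Set β}
  [DecidablePred (· ∈ S)]

theorem setOf_filter_mem_eq [DecidableEq ι] (A : Finset ι) :
    {ω | ({i | X i ω ∈ S} : Finset ι) = A} = ⋂ i, X i ⁻¹' (if i ∈ A then S else Sᶜ) := by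
  ext ω
  simp only [Set.mem_ofPred_eq, Set.mem_iInter, Set.mem_preimage, Finset.ext_iff, mem_filter,
    mem_univ, true_and]
  refine forall_congr' fun i => ?_
  split_ifs with hi <;> simp [hi]

variable [MeasurableSpace Ω] [MeasurableSpace β] {P : Measure Ω} [IsProbabilityMeasure P]

theorem measurable_card_filter_mem (hX : ∀ i, Measurable (X i)) (hS : MeasurableSet S) :
    Measurable fun ω => #{i | X i ω ∈ S} := by
  simp only [card_filter]
  exact Finset.measurable_sum _ fun i _ =>
    Measurable.ite (hX i hS) measurable_const measurable_const

theorem measurableSet_filter_mem_eq [DecidableEq ι] (hX : ∀ i, Measurable (X i))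
    (hS : MeasurableSet S) (A : Finset ι) :
    MeasurableSet {ω | ({i | X i ω ∈ S} : Finset ι) = A} := by
  rw [setOf_filter_mem_eq]
  refine MeasurableSet.iInter fun i => hX i ?_
  split_ifs
  exacts [hS, hS.compl]

theorem iIndepFun.measureReal_filter_mem_eq [DecidableEq ι] (hX : ∀ i, Measurable (X i))
    (hind : iIndepFun X P) (hS : MeasurableSet S) {p : ℝ} (hp : ∀ i, P.real (X i ⁻¹' S) = p)
    (A : Finset ι) :
    P.real {ω | ({i | X i ω ∈ S} : Finset ι) = A} =
      p ^ #A * (1 - p) ^ (Fintype.card ι - #A) := by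
  have hsets : ∀ i ∈ (univ : Finset ι), MeasurableSet (if i ∈ A then S else Sᶜ) := by
    intro i _
    split_ifs
    exacts [hS, hS.compl]
  have hfactor (i : ι) :
      P.real (X i ⁻¹' (if i ∈ A then S else Sᶜ)) = if i ∈ A then p else 1 - p := by
    split_ifs
    · exact hp i
    · rw [Set.preimage_compl, probReal_compl_eq_one_sub (hX i hS), hp i]
  have hprod := hind.measure_inter_preimage_eq_mul univ hsets
  simp only [mem_univ, Set.iInter_true] at hprod
  rw [setOf_filter_mem_eq, measureReal_def, hprod, ENNReal.toReal_prod]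
  simp only [← measureReal_def, hfactor, prod_ite, prod_const, filter_mem_eq_inter, univ_inter,
    filter_not, card_sdiff, card_univ, inter_univ]

theorem iIndepFun.measureReal_card_filter_mem_eq (hX : ∀ i, Measurable (X i))
    (hind : iIndepFun X P) (hS : MeasurableSet S) {p : ℝ} (hp : ∀ i, P.real (X i ⁻¹' S) = p)
    (c : ℕ) :
    P.real {ω | #{i | X i ω ∈ S} = c} =
      (Fintype.card ι).choose c * p ^ c * (1 - p) ^ (Fintype.card ι - c) := by
  classical
  have hfibres : {ω | #{i | X i ω ∈ S} = c} =
      (fun ω => ({i | X i ω ∈ S} : Finset ι)) ⁻¹' ↑(powersetCard c (univ : Finset ι)) := by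
    ext ω
    simp
  rw [hfibres, ← sum_measureReal_preimage_singleton _
    fun A _ => measurableSet_filter_mem_eq hX hS A]
  rw [sum_eq_card_nsmul (b := p ^ c * (1 - p) ^ (Fintype.card ι - c)) fun A hA => ?_,
    card_powersetCard, card_univ, nsmul_eq_mul, mul_assoc]
  rw [← (mem_powersetCard.1 hA).2]
  exact hind.measureReal_filter_mem_eq hX hS hp A

theorem iIndepFun.measureReal_card_filter_mem_le (hX : ∀ i, Measurable (X i))
    (hind : iIndepFun X P) (hS : MeasurableSet S) {p : ℝ} (hp : ∀ i, P.real (X i ⁻¹' S) = p)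
    (k : ℕ) :
    P.real {ω | #{i | X i ω ∈ S} ≤ k} = binCDF (Fintype.card ι) k p := by
  have hfibres : {ω | #{i | X i ω ∈ S} ≤ k} =
      (fun ω => #{i | X i ω ∈ S}) ⁻¹' ↑(range (k + 1)) := by
    ext ω
    simp
  rw [hfibres, ← sum_measureReal_preimage_singleton _ fun c _ => ?_, binCDF]
  · exact sum_congr rfl fun c _ => hind.measureReal_card_filter_mem_eq hX hS hp c
  · exact measurable_card_filter_mem hX hS (measurableSet_singleton c)

end ProbabilityTheory

theorem exists_one_sub_le_cdf_and_le_measureReal_Ici (μ : Measure ℝ) [IsProbabilityMeasure μ]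
    {ε : ℝ} (hε : ε ∈ Set.Ioo 0 1) : ∃ t, 1 - ε ≤ cdf μ t ∧ ε ≤ μ.real (Set.Ici t) := by
  set S := {t | 1 - ε ≤ cdf μ t}
  have hne : S.Nonempty := ((tendsto_cdf_atTop μ).eventually
    (eventually_ge_nhds (show 1 - ε < 1 by linarith [hε.1]))).exists
  have hbdd : BddBelow S := by
    obtain ⟨t₁, ht₁⟩ := ((tendsto_cdf_atBot μ).eventually
      (eventually_lt_nhds (show (0:ℝ) < 1 - ε by linarith [hε.2]))).exists_forall_of_atBot
    exact ⟨t₁, fun s hs => le_of_not_gt fun hst => (ht₁ s hst.le).not_ge hs⟩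
  refine ⟨sInf S, ?_, ?_⟩
  · refine ge_of_tendsto (((cdf μ).right_continuous _).mono_left
      (nhdsWithin_mono _ Set.Ioi_subset_Ici_self)) ?_
    filter_upwards [self_mem_nhdsWithin] with u hu
    obtain ⟨s, hs, hsu⟩ := (csInf_lt_iff hbdd hne).1 hu
    exact hs.trans (monotone_cdf μ hsu.le)
  · have hleft : Function.leftLim (cdf μ) (sInf S) ≤ 1 - ε := by
      refine le_of_tendsto ((monotone_cdf μ).tendsto_leftLim _) ?_
      filter_upwards [self_mem_nhdsWithin] with u hu
      exact (not_le.1 fun h => (csInf_le hbdd h).not_gt hu).le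
    rw [measureReal_def, ← measure_cdf μ, (cdf μ).measure_Ici (tendsto_cdf_atTop μ),
      ENNReal.toReal_ofReal (by linarith [hε.1])]
    linarith

theorem card_filter_le_lt_of_orderStat_lt {n : ℕ} {x : Fin n → ℝ} {j : Fin n} {t : ℝ}
    (h : orderStat x j < t) : #{i | t ≤ x i} < n - j := by
  have hsub : ({i | t ≤ x i} : Finset (Fin n)) ⊆ ((Iic j).map (Tuple.sort x).toEmbedding)ᶜ := by
    intro i hi
    rw [mem_compl, Finset.mem_map]
    rintro ⟨k, hk, rfl⟩
    have hlt : x (Tuple.sort x k) < t := (Tuple.monotone_sort x (mem_Iic.1 hk)).trans_lt h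
    exact (mem_filter.1 hi).2.not_gt hlt
  calc #{i | t ≤ x i} ≤ #((Iic j).map (Tuple.sort x).toEmbedding)ᶜ := card_le_card hsub
    _ < n - j := by
      rw [card_compl, card_map, Fin.card_Iic, Fintype.card_fin]
      omega

theorem toNat_floor_mul_sub_one_eq_sub_toNat_ceil {α : ℝ} (hα : α < 1) {n : ℕ}
    (h : (⌈(1 - α) * (n + 1 : ℝ)⌉).toNat - 1 < n) :
    (⌊α * (n + 1 : ℝ) - 1⌋).toNat = n - ((⌈(1 - α) * (n + 1 : ℝ)⌉).toNat - 1) - 1 := by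
  have hceil : ⌈(1 - α) * (n + 1 : ℝ)⌉ = n + 1 - ⌊α * (n + 1 : ℝ)⌋ := by
    rw [show (1 - α) * (n + 1 : ℝ) = -(α * (n + 1 : ℝ) - ((n + 1 : ℤ) : ℝ)) by push_cast; ring,
      Int.ceil_neg, Int.floor_sub_intCast]
    ring
  have hpos : 0 < ⌈(1 - α) * (n + 1 : ℝ)⌉ :=
    Int.ceil_pos.2 (mul_pos (sub_pos.2 hα) (by positivity))
  rw [Int.floor_sub_one]
  omega

theorem one_sub_measureReal_le_of_compl_subset {α : Type*} [MeasurableSpace α] {μ : Measure α}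
    [IsProbabilityMeasure μ] {s t : Set α} (h : sᶜ ⊆ t) : 1 - μ.real t ≤ μ.real s := by
  have hcover : 1 ≤ μ.real s + μ.real t :=
    calc 1 = μ.real (s ∪ sᶜ) := by rw [Set.union_compl_self, probReal_univ]
      _ ≤ μ.real s + μ.real sᶜ := measureReal_union_le _ _
      _ ≤ μ.real s + μ.real t := add_le_add_right (measureReal_mono h) _
  linarith

/-- If `δ ≥ Bin(⌊α(n+1)-1⌋; n, ε)` then the split conformal set
`r_{n+1} ≤ r_{(⌈(1-α)(n+1)⌉)}` (with the order statistic interpreted as `+∞`, i.e. full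
coverage, when `⌈(1-α)(n+1)⌉ > n`) is an `(ε,δ)`-tolerance region: with probability at
least `1-δ` the conditional coverage is at least `1-ε`. -/
theorem split_conformal_tolerance_region
    {Ω : Type*} [MeasurableSpace Ω] (P : Measure Ω) [IsProbabilityMeasure P]
    (n : ℕ) (r : Fin (n + 1) → Ω → ℝ) (hr : ∀ i, Measurable (r i))
    (μ : Measure ℝ) [IsProbabilityMeasure μ]
    (hindep : iIndepFun r P)
    (hid : ∀ i, Measure.map (r i) P = μ)
    (ε δ α : ℝ) (hε : ε ∈ Set.Ioo (0:ℝ) 1) (hδ : δ ∈ Set.Ioo (0:ℝ) 1)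
    (hα : α ∈ Set.Ioo (0:ℝ) 1)
    (hcond : binCDF n (⌊α * (n + 1 : ℝ) - 1⌋).toNat ε ≤ δ) :
    1 - δ ≤ (P {ω | 1 - ε ≤
        (if h : (⌈(1 - α) * (n + 1 : ℝ)⌉).toNat - 1 < n then
          (μ (Set.Iic (orderStat (fun i : Fin n => r i.castSucc ω)
              ⟨(⌈(1 - α) * (n + 1 : ℝ)⌉).toNat - 1, h⟩))).toReal
        else 1)}).toReal := by
  by_cases h : (⌈(1 - α) * (n + 1 : ℝ)⌉).toNat - 1 < n
  swap
  · simp [h, hε.1.le, hδ.1.le]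
  simp only [dif_pos h, ← measureReal_def]
  set m := (⌈(1 - α) * (n + 1 : ℝ)⌉).toNat - 1
  set k := (⌊α * (n + 1 : ℝ) - 1⌋).toNat
  have hk : k = n - m - 1 := toNat_floor_mul_sub_one_eq_sub_toNat_ceil hα.2 h
  obtain ⟨t, hcdf, hq⟩ := exists_one_sub_le_cdf_and_le_measureReal_Ici μ hε
  have hbad : {ω | 1 - ε ≤ μ.real (Set.Iic (orderStat (fun i : Fin n => r i.castSucc ω) ⟨m, h⟩))}ᶜ
      ⊆ {ω | #{i : Fin n | r i.castSucc ω ∈ Set.Ici t} ≤ k} := by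
    intro ω hω
    simp only [Set.mem_compl_iff, Set.mem_ofPred_eq, not_le, ← cdf_eq_real] at hω
    have hlt : orderStat (fun i : Fin n => r i.castSucc ω) ⟨m, h⟩ < t :=
      lt_of_not_ge fun hle => (hω.trans_le hcdf).not_ge (monotone_cdf μ hle)
    have hcard : #{i | t ≤ r (Fin.castSucc i) ω} < n - m := card_filter_le_lt_of_orderStat_lt hlt
    simp only [Set.mem_ofPred_eq, Set.mem_Ici]
    omega
  have hcount := (hindep.precomp (Fin.castSucc_injective n)).measureReal_card_filter_mem_le
    (fun i => hr _) measurableSet_Ici (p := μ.real (Set.Ici t))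
    (fun i => by rw [← map_measureReal_apply (hr _) measurableSet_Ici, hid]) k
  rw [Fintype.card_fin] at hcount
  have hmono : binCDF n k (μ.real (Set.Ici t)) ≤ binCDF n k ε :=
    binCDF_antitoneOn n k ⟨hε.1.le, hε.2.le⟩ ⟨measureReal_nonneg, measureReal_le_one⟩ hq
  linarith [one_sub_measureReal_le_of_compl_subset (μ := P) hbad]
end

section
/- Let r_1,…,r_{n+1} be iid, ε, δ ∈ (0,1), and set k* = sup{k ∈ {0,…,n} : Bin(k; n, ε) ≤ δ} (assume it exists) and P̂ = r_{(n−k*)}. Then P[r_{n+1} ≤ P̂] ≥ 1 − (k*+1)/(n+1); i.e., the (ε,δ)-tolerance quantile choice also satisfies marginal coverage at confidence 1 − (k*+1)/(n+1). -/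
open MeasureTheory ProbabilityTheory
open scoped ENNReal

/-!
If `r_{n+1}` exceeds the order statistic `r_{(n-k)}` of the first `n` values, then it strictly
exceeds at least `n - k` of the other values. In any vector at most `k + 1` coordinates can
strictly exceed `n - k` others: the smallest of them exceeds only coordinates outside this set.
The joint law of iid coordinates is a product measure, invariant under permutations, so every
coordinate has the same probability `p` of strictly exceeding `n - k` others, and counting gives
`(n + 1) p ≤ k + 1`.
-/

open Finset

section Rank

variable {ι α : Type*} [Fintype ι] [LinearOrder α]

def numLT (x : ι → α) (i : ι) : ℕ := #{j | x j < x i}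

lemma numLT_comp_equiv (x : ι → α) (e : ι ≃ ι) (i : ι) :
    numLT (x ∘ e) i = numLT x (e i) :=
  card_equiv e (by simp)

lemma card_le_numLT_le (x : ι → α) (c : ℕ) :
    #{i | c ≤ numLT x i} ≤ Fintype.card ι - c := by
  classical
  set S : Finset ι := {i | c ≤ numLT x i}
  obtain hS | hS := S.eq_empty_or_nonempty
  · simp [hS]
  obtain ⟨i₀, hi₀, hmin⟩ := S.exists_min_image x hS
  have hc : c ≤ numLT x i₀ := (mem_filter.mp hi₀).2
  have hbelow : ({j | x j < x i₀} : Finset ι) ⊆ Sᶜ := fun j hj =>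
    mem_compl.mpr fun hjS => (mem_filter.mp hj).2.not_ge (hmin j hjS)
  have hcard := card_le_card hbelow
  rw [card_compl] at hcard
  unfold numLT at hc
  have := S.card_le_univ
  omega

end Rank

lemma succ_le_card_lt_of_orderStat_lt {n : ℕ} {y : Fin n → ℝ} {j : Fin n} {a : ℝ}
    (h : orderStat y j < a) : (j : ℕ) + 1 ≤ #{i | y i < a} :=
  calc (j : ℕ) + 1 = #((Iic j).map (Tuple.sort y).toEmbedding) := by simp
    _ ≤ #{i | y i < a} := card_le_card fun i hi => by
      obtain ⟨t, ht, rfl⟩ := mem_map.mp hi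
      exact mem_filter.mpr ⟨mem_univ _,
        (Tuple.monotone_sort y (mem_Iic.mp ht)).trans_lt h⟩

lemma card_castSucc_lt_le_numLT {n : ℕ} (x : Fin (n + 1) → ℝ) :
    #{i : Fin n | x i.castSucc < x (Fin.last n)} ≤ numLT x (Fin.last n) :=
  card_le_card_of_injOn Fin.castSucc (fun i hi => by simpa using hi)
    (Fin.castSucc_injective n).injOn

lemma sum_measure_le_of_card_mem_le {α ι : Type*} [MeasurableSpace α] [Fintype ι]
    (ν : Measure α) {B : ι → Set α} (hB : ∀ i, MeasurableSet (B i)) {c : ℕ}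
    (hc : ∀ x (s : Finset ι), (∀ i ∈ s, x ∈ B i) → #s ≤ c) :
    ∑ i, ν (B i) ≤ c * ν Set.univ := by
  classical
  calc ∑ i, ν (B i) = ∫⁻ x, ∑ i, (B i).indicator 1 x ∂ν := by
        rw [lintegral_finsetSum _ fun i _ => measurable_one.indicator (hB i)]
        simp_rw [lintegral_indicator_one (hB _)]
    _ ≤ ∫⁻ _, (c : ℝ≥0∞) ∂ν := lintegral_mono fun x => by
        simp only [Set.indicator_apply, Pi.one_apply, ← natCast_card_filter]
        exact_mod_cast hc x _ fun i hi => (mem_filter.mp hi).2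
    _ = c * ν Set.univ := lintegral_const _

lemma measurePreserving_comp_equiv {ι α : Type*} [Fintype ι] [MeasurableSpace α]
    (μ : Measure α) [SigmaFinite μ] (e : ι ≃ ι) :
    MeasurePreserving (fun x : ι → α => x ∘ e) (Measure.pi fun _ => μ)
      (Measure.pi fun _ => μ) := by
  convert measurePreserving_piCongrLeft (fun _ : ι => μ) e.symm using 1
  ext x i
  simp [MeasurableEquiv.piCongrLeft, Equiv.piCongrLeft_apply, eq_rec_constant]

section Exchangeable

variable {ι : Type*} [Fintype ι] (μ : Measure ℝ) [IsProbabilityMeasure μ]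

lemma measurable_numLT (i : ι) : Measurable fun x : ι → ℝ => numLT x i := by
  simp only [numLT, card_filter]
  exact Finset.measurable_sum _ fun j _ => Measurable.ite
    (measurableSet_lt (measurable_pi_apply j) (measurable_pi_apply i)) measurable_const
    measurable_const

lemma card_mul_measure_le_numLT_le (c : ℕ) (i : ι) :
    Fintype.card ι * Measure.pi (fun _ => μ) {x | c ≤ numLT x i}
      ≤ (Fintype.card ι - c : ℕ) := by
  classical
  set ν := Measure.pi fun _ : ι => μ
  have hB (j : ι) : MeasurableSet {x : ι → ℝ | c ≤ numLT x j} :=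
    measurableSet_le measurable_const (measurable_numLT j)
  have hexch (j : ι) : ν {x | c ≤ numLT x j} = ν {x | c ≤ numLT x i} := by
    rw [← (measurePreserving_comp_equiv μ (Equiv.swap i j)).measure_preimage
      (hB j).nullMeasurableSet]
    congr! 1
    ext x
    simp [numLT_comp_equiv]
  calc Fintype.card ι * ν {x | c ≤ numLT x i} = ∑ j, ν {x | c ≤ numLT x j} := by
        simp [hexch]
    _ ≤ (Fintype.card ι - c : ℕ) * ν Set.univ :=
        sum_measure_le_of_card_mem_le ν hB fun x s hs =>
          (card_le_card fun j hj => mem_filter.mpr ⟨mem_univ j, hs j hj⟩).trans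
            (card_le_numLT_le x c)
    _ = (Fintype.card ι - c : ℕ) := by simp

lemma measureReal_le_numLT_le (c : ℕ) (i : ι) :
    (Measure.pi fun _ => μ).real {x | c ≤ numLT x i}
      ≤ (Fintype.card ι - c : ℕ) / (Fintype.card ι : ℝ) := by
  have hcard : (0 : ℝ) < Fintype.card ι := by exact_mod_cast Fintype.card_pos_iff.mpr ⟨i⟩
  rw [le_div_iff₀' hcard, measureReal_def]
  have := ENNReal.toReal_mono (by simp) (card_mul_measure_le_numLT_le μ c i)
  rwa [ENNReal.toReal_mul, ENNReal.toReal_natCast, ENNReal.toReal_natCast] at this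

end Exchangeable

theorem tolerance_quantile_marginal_coverage
    {Ω : Type*} [MeasurableSpace Ω] (P : Measure Ω) [IsProbabilityMeasure P]
    (n : ℕ) (hn : 1 ≤ n) (r : Fin (n + 1) → Ω → ℝ) (hr : ∀ i, Measurable (r i))
    (μ : Measure ℝ)
    (hindep : iIndepFun r P)
    (hid : ∀ i, Measure.map (r i) P = μ)
    (k : ℕ) :
    1 - ((k : ℝ) + 1) / (n + 1)
      ≤ (P {ω | r (Fin.last n) ω ≤
          orderStat (fun i : Fin n => r i.castSucc ω) ⟨n - k - 1, by omega⟩}).toReal := by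
  obtain hk | hk := lt_or_ge k n
  swap
  · calc 1 - ((k : ℝ) + 1) / (n + 1) ≤ 0 := by
          rw [sub_nonpos, one_le_div (by positivity)]
          exact_mod_cast Nat.succ_le_succ hk
      _ ≤ _ := ENNReal.toReal_nonneg
  have : IsProbabilityMeasure μ := hid 0 ▸ Measure.isProbabilityMeasure_map (hr 0).aemeasurable
  set R : Ω → Fin (n + 1) → ℝ := fun ω i => r i ω
  have hR : Measurable R := measurable_pi_lambda _ hr
  have hlaw : P.map R = Measure.pi fun _ => μ := by
    simpa [hid] using hindep.map_fun_eq_pi_map fun i => (hr i).aemeasurable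
  set B := {x : Fin (n + 1) → ℝ | n - k ≤ numLT x (Fin.last n)}
  have hB : MeasurableSet B := measurableSet_le measurable_const (measurable_numLT _)
  set bad := R ⁻¹' B
  have hbad : P.real bad ≤ ((k : ℝ) + 1) / (n + 1) := by
    rw [← map_measureReal_apply hR hB, hlaw]
    have h := measureReal_le_numLT_le μ (n - k) (Fin.last n)
    rw [Fintype.card_fin, show n + 1 - (n - k) = k + 1 by omega] at h
    exact_mod_cast h
  have hcover : badᶜ ⊆ {ω | r (Fin.last n) ω ≤
      orderStat (fun i : Fin n => r i.castSucc ω) ⟨n - k - 1, by omega⟩} := by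
    intro ω hω
    by_contra hlt
    have h₁ := succ_le_card_lt_of_orderStat_lt (not_le.mp hlt)
    have h₂ := card_castSucc_lt_le_numLT (R ω)
    simp only [R] at h₁ h₂
    exact hω (show n - k ≤ numLT (fun i => r i ω) (Fin.last n) by omega)
  calc 1 - ((k : ℝ) + 1) / (n + 1) ≤ 1 - P.real bad := by linarith
    _ = P.real badᶜ := (probReal_compl_eq_one_sub (hR hB)).symm
    _ ≤ _ := measureReal_mono hcover
end
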